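/- The Sorokin-type rational functions defined recursively by S_0(w) = 1/(1-w) and S_n(p_1,q_1;…;p_n,q_n;w) = w^{q_n} · (1/(p_n+q_n)!) d^{p_n+q_n}/dw^{p_n+q_n} [ w^{p_n} S_{n-1}(p_1,q_1;…;p_{n-1},q_{n-1};w) ] satisfy, for |w| < 1: S_n(p_1,q_1;…;p_n,q_n;w) = Σ_{k=0}^∞ C(k+p_1, p_1+q_1) ⋯ C(k+p_n, p_n+q_n) w^k. -/

import Mathlib

open scoped Nat

/-- Auxiliary recursion for Sorokin-type rational functions, peeling the
outermost (i.e. last) index pair from the head of the list. -/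
noncomputable def SorAux : List (ℕ × ℕ) → ℂ → ℂ
  | [], w => 1 / (1 - w)
  | (p, q) :: rest, w =>
      w ^ q * ((1 / ((p + q)! : ℂ)) *
        iteratedDeriv (p + q) (fun x : ℂ => x ^ p * SorAux rest x) w)

/-- The Sorokin-type rational function `S_n(p_1,q_1;…;p_n,q_n;w)`:
`S_0(w) = 1/(1-w)` and `S_n = w^{q_n} D_{p_n+q_n}(w^{p_n} S_{n-1})`. -/
noncomputable def Sor (L : List (ℕ × ℕ)) (w : ℂ) : ℂ := SorAux L.reverse w

/-!
Every function in sight is a power series on the unit disc whose coefficients grow at most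
polynomially, so it may be differentiated termwise any number of times. Multiplying by `w ^ p`
shifts the coefficients by `p`, and `w ^ q • D_{p+q}` sends `w ^ (k + p)` to
`C(k + p, p + q) • w ^ k`; hence each step of the recursion multiplies the `k`-th coefficient
by `C(k + p, p + q)`, starting from the geometric series `1 / (1 - w)`.
-/

open Asymptotics Filter Metric Topology

lemma isBigO_natCast_add_const (c : ℕ) :
    (fun k : ℕ => (k : ℝ) + c) =O[atTop] fun k => (k : ℝ) := by
  refine IsBigO.of_bound (c + 1) ?_
  filter_upwards [eventually_ge_atTop 1] with k hk
  have hk' : (1 : ℝ) ≤ k := by exact_mod_cast hk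
  rw [Real.norm_of_nonneg (by positivity), Real.norm_natCast]
  nlinarith

lemma isBigO_natCast_sub_const (c : ℕ) :
    (fun k : ℕ => ((k - c : ℕ) : ℝ)) =O[atTop] fun k => (k : ℝ) :=
  IsBigO.of_bound 1 <| Eventually.of_forall fun k => by simp

section PowerSeries

variable {𝕜 : Type*} [RCLike 𝕜] {a : ℕ → 𝕜} {d : ℕ}

lemma summable_norm_mul_pow_of_isBigO (ha : a =O[atTop] fun k => (k : ℝ) ^ d) {r : ℝ}
    (hr0 : 0 ≤ r) (hr1 : r < 1) : Summable fun k => ‖a k‖ * r ^ k :=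
  summable_of_isBigO_nat
    (summable_pow_mul_geometric_of_norm_lt_one d (by rwa [Real.norm_of_nonneg hr0]))
    (ha.norm_left.mul (isBigO_refl _ _))

lemma summable_mul_pow_of_isBigO (ha : a =O[atTop] fun k => (k : ℝ) ^ d) {x : 𝕜}
    (hx : ‖x‖ < 1) : Summable fun k => a k * x ^ k :=
  .of_norm <| by
    simpa only [norm_mul, norm_pow] using summable_norm_mul_pow_of_isBigO ha (norm_nonneg x) hx

def derivCoeff (a : ℕ → 𝕜) (k : ℕ) : 𝕜 := (k + 1) * a (k + 1)

lemma derivCoeff_iterate (m : ℕ) (a : ℕ → 𝕜) (k : ℕ) :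
    derivCoeff^[m] a k = (k + m).descFactorial m * a (k + m) := by
  induction m generalizing a with
  | zero => simp
  | succ m ih =>
    rw [Function.iterate_succ_apply, ih, derivCoeff, ← add_assoc, Nat.succ_descFactorial_succ]
    push_cast
    ring

lemma isBigO_derivCoeff (ha : a =O[atTop] fun k => (k : ℝ) ^ d) :
    derivCoeff a =O[atTop] fun k => (k : ℝ) ^ (d + 1) := by
  have hlin : (fun k : ℕ => ((k : 𝕜) + 1)) =O[atTop] fun k => (k : ℝ) :=
    isBigO_norm_left.mp <| (isBigO_natCast_add_const 1).congr_left fun k => by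
      simpa using (RCLike.norm_natCast (K := 𝕜) (k + 1)).symm
  have hshift : (fun k => a (k + 1)) =O[atTop] fun k => (k : ℝ) ^ d := by
    refine (ha.comp_tendsto (tendsto_add_atTop_nat 1)).trans ?_
    exact ((isBigO_natCast_add_const 1).pow d).congr_left fun k => by simp
  exact (hlin.mul hshift).congr_right fun k => by ring

lemma hasDerivAt_tsum_mul_pow (ha : a =O[atTop] fun k => (k : ℝ) ^ d) {w : 𝕜}
    (hw : ‖w‖ < 1) :
    HasDerivAt (fun z => ∑' k, a k * z ^ k) (∑' k, derivCoeff a k * w ^ k) w := by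
  obtain ⟨r, hwr, hr1⟩ := exists_between hw
  have hr0 : 0 < r := (norm_nonneg w).trans_lt hwr
  have hu : Summable fun n => ‖derivCoeff a (n - 1)‖ * r ^ (n - 1) :=
    (summable_nat_add_iff 1).mp <| by
      simpa using summable_norm_mul_pow_of_isBigO (isBigO_derivCoeff ha) hr0.le hr1
  have hbound : ∀ n, ∀ y ∈ ball (0 : 𝕜) r,
      ‖a n * (n * y ^ (n - 1))‖ ≤ ‖derivCoeff a (n - 1)‖ * r ^ (n - 1) := by
    rintro (_ | n) y hy
    · simp
    · rw [mem_ball_zero_iff] at hy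
      rw [derivCoeff, Nat.add_sub_cancel, Nat.cast_succ, norm_mul, norm_mul, norm_mul, norm_pow]
      calc ‖a (n + 1)‖ * (‖(n : 𝕜) + 1‖ * ‖y‖ ^ n)
          = ‖(n : 𝕜) + 1‖ * ‖a (n + 1)‖ * ‖y‖ ^ n := by ring
        _ ≤ _ := by gcongr
  have hderiv := hasDerivAt_tsum_of_isPreconnected hu isOpen_ball
    (convex_ball (0 : 𝕜) r).isPreconnected
    (fun n y _ => (hasDerivAt_pow n y).const_mul (a n)) hbound (mem_ball_self hr0)
    (summable_mul_pow_of_isBigO ha (by simp)) (mem_ball_zero_iff.mpr hwr)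
  refine hderiv.congr_deriv ?_
  rw [tsum_eq_zero_add' (by simpa [derivCoeff, mul_comm, mul_left_comm, mul_assoc]
    using summable_mul_pow_of_isBigO (isBigO_derivCoeff ha) hw)]
  simp only [CharP.cast_eq_zero, zero_mul, mul_zero, zero_add, Nat.add_sub_cancel, derivCoeff]
  exact tsum_congr fun k => by push_cast; ring

lemma isBigO_derivCoeff_iterate (m : ℕ) (ha : a =O[atTop] fun k => (k : ℝ) ^ d) :
    derivCoeff^[m] a =O[atTop] fun k => (k : ℝ) ^ (d + m) := by
  induction m generalizing a d with
  | zero => exact ha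
  | succ m ih =>
    rw [Function.iterate_succ_apply, ← add_assoc, add_right_comm]
    exact ih (isBigO_derivCoeff ha)

lemma iteratedDeriv_tsum_mul_pow (m : ℕ) (ha : a =O[atTop] fun k => (k : ℝ) ^ d) {w : 𝕜}
    (hw : ‖w‖ < 1) :
    iteratedDeriv m (fun z => ∑' k, a k * z ^ k) w = ∑' k, derivCoeff^[m] a k * w ^ k := by
  induction m generalizing a d with
  | zero => simp
  | succ m ih =>
    have hderiv : deriv (fun z => ∑' k, a k * z ^ k) =ᶠ[𝓝 w]
        fun z => ∑' k, derivCoeff a k * z ^ k := by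
      filter_upwards [isOpen_ball.mem_nhds (mem_ball_zero_iff.mpr hw)] with z hz
      exact (hasDerivAt_tsum_mul_pow ha (mem_ball_zero_iff.mp hz)).deriv
    rw [iteratedDeriv_succ', hderiv.iteratedDeriv_eq, ih (isBigO_derivCoeff ha),
      Function.iterate_succ_apply]

lemma hasSum_nat_add_iff_of_eq_zero {G : Type*} [AddCommGroup G] [TopologicalSpace G]
    [IsTopologicalAddGroup G] {f : ℕ → G} {k : ℕ} (hf : ∀ i < k, f i = 0) {g : G} :
    HasSum (fun n => f (n + k)) g ↔ HasSum f g := by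
  have hsum : ∑ i ∈ Finset.range k, f i = 0 :=
    Finset.sum_eq_zero fun i hi => hf i (Finset.mem_range.mp hi)
  simpa [hsum] using hasSum_nat_add_iff' (f := f) (g := g) k

def shiftCoeff (p : ℕ) (a : ℕ → 𝕜) (k : ℕ) : 𝕜 := if p ≤ k then a (k - p) else 0

lemma hasSum_shiftCoeff_mul_pow (p : ℕ) {x s : 𝕜} (h : HasSum (fun k => a k * x ^ k) s) :
    HasSum (fun k => shiftCoeff p a k * x ^ k) (x ^ p * s) := by
  rw [← hasSum_nat_add_iff_of_eq_zero (k := p) fun i hi => by simp [shiftCoeff, hi.not_ge]]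
  simpa [shiftCoeff, pow_add, mul_left_comm, mul_comm] using h.mul_left (x ^ p)

lemma isBigO_shiftCoeff (p : ℕ) (ha : a =O[atTop] fun k => (k : ℝ) ^ d) :
    shiftCoeff p a =O[atTop] fun k => (k : ℝ) ^ d := by
  have hshift : shiftCoeff p a =ᶠ[atTop] fun k => a (k - p) := by
    filter_upwards [eventually_ge_atTop p] with k hk using if_pos hk
  exact hshift.trans_isBigO <|
    (ha.comp_tendsto (tendsto_sub_atTop_nat p)).trans ((isBigO_natCast_sub_const p).pow d)

lemma isBigO_choose_add (p n : ℕ) :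
    (fun k : ℕ => ((k + p).choose n : 𝕜)) =O[atTop] fun k => (k : ℝ) ^ n := by
  refine (IsBigO.of_bound 1 (Eventually.of_forall fun k => ?_)).trans
    ((isBigO_natCast_add_const p).pow n)
  rw [RCLike.norm_natCast, one_mul, norm_pow, Real.norm_of_nonneg (by positivity)]
  exact_mod_cast Nat.choose_le_pow (k + p) n

theorem hasSum_sorokinStep {f : 𝕜 → 𝕜} (ha : a =O[atTop] fun k => (k : ℝ) ^ d)
    (hf : ∀ x : 𝕜, ‖x‖ < 1 → HasSum (fun k => a k * x ^ k) (f x)) (p q : ℕ) {w : 𝕜}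
    (hw : ‖w‖ < 1) :
    HasSum (fun k => ((k + p).choose (p + q) : 𝕜) * a k * w ^ k)
      (w ^ q * (1 / ((p + q)! : 𝕜) * iteratedDeriv (p + q) (fun x => x ^ p * f x) w)) := by
  have hb := isBigO_shiftCoeff p ha
  have hfb : (fun x => x ^ p * f x) =ᶠ[𝓝 w] fun z => ∑' k, shiftCoeff p a k * z ^ k := by
    filter_upwards [isOpen_ball.mem_nhds (mem_ball_zero_iff.mpr hw)] with z hz
    exact (hasSum_shiftCoeff_mul_pow p (hf z (mem_ball_zero_iff.mp hz))).tsum_eq.symm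
  have hD : HasSum (fun k => derivCoeff^[p + q] (shiftCoeff p a) k * w ^ k)
      (iteratedDeriv (p + q) (fun x => x ^ p * f x) w) := by
    rw [hfb.iteratedDeriv_eq, iteratedDeriv_tsum_mul_pow _ hb hw]
    exact (summable_mul_pow_of_isBigO (isBigO_derivCoeff_iterate _ hb) hw).hasSum
  -- the coefficients with `k < q` vanish, as then `k + p < p + q`
  rw [← hasSum_nat_add_iff_of_eq_zero (k := q) fun i hi => by
    simp [Nat.choose_eq_zero_of_lt (by omega : i + p < p + q)]]
  refine ((hD.mul_left (1 / ((p + q)! : 𝕜))).mul_left (w ^ q)).congr_fun fun k => ?_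
  have hshift : shiftCoeff p a (k + (p + q)) = a (k + q) := by
    simp [shiftCoeff, show p ≤ k + (p + q) by omega, show k + (p + q) - p = k + q by omega]
  rw [derivCoeff_iterate, hshift, Nat.descFactorial_eq_factorial_mul_choose,
    show k + q + p = k + (p + q) by omega, pow_add]
  have hfac : ((p + q)! : 𝕜) ≠ 0 := Nat.cast_ne_zero.mpr (Nat.factorial_ne_zero _)
  push_cast
  field_simp

end PowerSeries

def sorCoeff (L : List (ℕ × ℕ)) (k : ℕ) : ℂ :=
  (L.map fun pq => ((k + pq.1).choose (pq.1 + pq.2) : ℂ)).prod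

lemma isBigO_sorCoeff (L : List (ℕ × ℕ)) :
    ∃ d : ℕ, sorCoeff L =O[atTop] fun k => (k : ℝ) ^ d := by
  induction L with
  | nil =>
    exact ⟨0, (isBigO_const_const (1 : ℂ) one_ne_zero atTop).congr
      (fun k => by simp [sorCoeff]) (fun k => by simp)⟩
  | cons pq L ih =>
    obtain ⟨d, hd⟩ := ih
    refine ⟨pq.1 + pq.2 + d, ((isBigO_choose_add pq.1 (pq.1 + pq.2)).mul hd).congr ?_ ?_⟩
    · intro k; simp [sorCoeff]
    · intro k; ring

theorem hasSum_sorAux (M : List (ℕ × ℕ)) {w : ℂ} (hw : ‖w‖ < 1) :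
    HasSum (fun k => sorCoeff M k * w ^ k) (SorAux M w) := by
  induction M generalizing w with
  | nil => simpa [sorCoeff, SorAux] using hasSum_geometric_of_norm_lt_one hw
  | cons pq M ih =>
    obtain ⟨p, q⟩ := pq
    obtain ⟨d, hd⟩ := isBigO_sorCoeff M
    simpa [sorCoeff, SorAux, mul_assoc] using hasSum_sorokinStep hd (fun x hx => ih hx) p q hw

theorem Sor_eq_series (L : List (ℕ × ℕ)) (w : ℂ) (hw : ‖w‖ < 1) :
    HasSum
      (fun k : ℕ => (L.map fun pq => ((k + pq.1).choose (pq.1 + pq.2) : ℂ)).prod * w ^ k)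
      (Sor L w) := by
  simpa [Sor, sorCoeff, List.map_reverse, List.prod_reverse] using hasSum_sorAux L.reverse hw
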